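/- arXiv:1008.0812 — 2 statements merged into one kernel-verified Lean document; each statement's English description precedes it below -/
import Mathlib

section
/- Let c > 0 and n ∈ ℤ. Suppose u : ℝ → ℂ is a C² function such that u, u' and u'' are square-integrable on ℝ, and u satisfies u''(x) + i·n·u(x) − 2·(Q_c(x)·u(x))' = 0 for all x ∈ ℝ. Then u ≡ 0. -/
open MeasureTheory Real

/-- The kink profile `Q_c(x) = √(c/2) · tanh(√(c/2)·x)`. -/
noncomputable def kinkProfile (c x : ℝ) : ℝ := Real.sqrt (c / 2) * Real.tanh (Real.sqrt (c / 2) * x)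

private lemma hasDerivAt_tanh' (x : ℝ) : HasDerivAt Real.tanh (1 / Real.cosh x ^ 2) x := by
  have h := (Real.hasDerivAt_sinh x).div (Real.hasDerivAt_cosh x) (ne_of_gt (Real.cosh_pos x))
  have e : (Real.cosh x * Real.cosh x - Real.sinh x * Real.sinh x) / Real.cosh x ^ 2
      = 1 / Real.cosh x ^ 2 := by
    rw [show Real.cosh x * Real.cosh x - Real.sinh x * Real.sinh x
        = Real.cosh x ^ 2 - Real.sinh x ^ 2 by ring, Real.cosh_sq_sub_sinh_sq]
  rw [e] at h
  exact (funext Real.tanh_eq_sinh_div_cosh : Real.tanh = _) ▸ h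

private lemma prod_L2_integrable {f g : ℝ → ℂ} (hf : MemLp f 2 volume) (hg : MemLp g 2 volume) :
    Integrable (fun x => ‖f x‖ * ‖g x‖) := by
  have h := (hg.norm).smul (hf.norm) (p := 2) (q := 2) (r := 1)
  rw [memLp_one_iff_integrable] at h
  simpa [smul_eq_mul, Pi.mul_def] using h

private lemma sq_norm_integrable {f : ℝ → ℂ} (hf : MemLp f 2 volume) :
    Integrable (fun x => (f x).re * (f x).re + (f x).im * (f x).im) := by
  have h := hf.integrable_norm_rpow (by norm_num) (by norm_num)
  refine h.congr (ae_of_all _ fun x => ?_)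
  show ‖f x‖ ^ (2:ENNReal).toReal = _
  rw [show ((2:ENNReal).toReal) = ((2:ℕ):ℝ) by norm_num, Real.rpow_natCast,
    Complex.sq_norm, Complex.normSq_apply]

private lemma re_prod_le {z w : ℂ} : |z.re * w.re + z.im * w.im| ≤ ‖z‖ * ‖w‖ := by
  have h := Complex.abs_re_le_norm ((starRingEnd ℂ) z * w)
  simpa [Complex.mul_re, map_mul] using h

/-- The `n`-th transverse Fourier mode of `L_c u = 0` has no nontrivial `L²` solution:
if `u : ℝ → ℂ` is `C²` with `u, u', u'' ∈ L²` and `u'' + i n u − 2 (Q_c u)' = 0`, then `u ≡ 0`. -/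
theorem fourier_mode_Lc_trivial (c : ℝ) (hc : 0 < c) (n : ℤ) (u : ℝ → ℂ)
    (hreg : ContDiff ℝ 2 u)
    (hu : MemLp u 2 volume)
    (hu' : MemLp (deriv u) 2 volume)
    (hu'' : MemLp (deriv (deriv u)) 2 volume)
    (heq : ∀ x : ℝ,
      deriv (deriv u) x + (n : ℂ) * Complex.I * u x
        - 2 * deriv (fun t => (kinkProfile c t : ℂ) * u t) x = 0) :
    ∀ x : ℝ, u x = 0 := by
  set a : ℝ := Real.sqrt (c / 2) with ha
  have ha0 : 0 < a := Real.sqrt_pos.2 (by linarith)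
  set Q' : ℝ → ℝ := fun x => a ^ 2 / Real.cosh (a * x) ^ 2 with hQ'def
  have hQ'pos : ∀ x, 0 < Q' x := fun x => div_pos (pow_pos ha0 2) (pow_pos (Real.cosh_pos _) 2)
  -- derivative of the kink profile
  have hQd : ∀ x, HasDerivAt (kinkProfile c) (Q' x) x := by
    intro x
    have h1 : HasDerivAt (fun t : ℝ => a * t) a x := by
      simpa using (hasDerivAt_id x).const_mul a
    have h2 := ((hasDerivAt_tanh' (a * x)).comp x h1).const_mul a
    have h3 : HasDerivAt (kinkProfile c) (a * (1 / Real.cosh (a * x) ^ 2 * a)) x :=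
      h2.congr_of_eventuallyEq (Filter.Eventually.of_forall fun t => by
        simp [kinkProfile, ha, Function.comp])
    convert h3 using 1
    simp only [hQ'def]
    field_simp
  -- bound on the kink profile
  have habs_tanh : ∀ y : ℝ, |Real.tanh y| ≤ 1 := by
    intro y
    have h2 : |Real.sinh y| ≤ Real.cosh y := by
      nlinarith [Real.cosh_sq_sub_sinh_sq y, abs_nonneg (Real.sinh y),
        sq_abs (Real.sinh y), Real.cosh_pos y,
        mul_self_nonneg (|Real.sinh y| - Real.cosh y)]
    rw [Real.tanh_eq_sinh_div_cosh, abs_div, abs_of_pos (Real.cosh_pos y)]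
    exact div_le_one_of_le₀ h2 (Real.cosh_pos y).le
  have hQbound : ∀ x, |kinkProfile c x| ≤ a := by
    intro x
    rw [kinkProfile, abs_mul, abs_of_pos (show (0:ℝ) < Real.sqrt (c/2) from ha0)]
    calc Real.sqrt (c/2) * |Real.tanh (Real.sqrt (c/2) * x)|
        ≤ Real.sqrt (c/2) * 1 := by
          exact mul_le_mul_of_nonneg_left (habs_tanh _) (Real.sqrt_nonneg _)
      _ = a := by rw [mul_one]
  -- regularity
  have hud : Differentiable ℝ u := hreg.differentiable two_ne_zero
  have h2r : ContDiff ℝ 1 (deriv u) := by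
    have h : ContDiff ℝ (1 + 1) u := by exact_mod_cast hreg
    exact (contDiff_succ_iff_deriv.mp h).2.2
  have hud' : Differentiable ℝ (deriv u) := h2r.differentiable one_ne_zero
  have hcu : Continuous u := hud.continuous
  have hcu' : Continuous (deriv u) := hud'.continuous
  -- the equation, solved for u''
  have heq2 : ∀ x, deriv (deriv u) x
      = 2 * ((Q' x : ℂ) * u x + (kinkProfile c x : ℂ) * deriv u x)
        - (n : ℂ) * Complex.I * u x := by
    intro x
    have hd : HasDerivAt (fun t => (kinkProfile c t : ℂ) * u t)
        ((Q' x : ℂ) * u x + (kinkProfile c x : ℂ) * deriv u x) x :=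
      ((hQd x).ofReal_comp).mul (hud x).hasDerivAt
    have h := heq x
    rw [hd.deriv] at h
    linear_combination h
  -- component derivatives
  have hur : ∀ x, HasDerivAt (fun t => (u t).re) ((deriv u x).re) x := fun x =>
    Complex.reCLM.hasFDerivAt.comp_hasDerivAt x (hud x).hasDerivAt
  have hui : ∀ x, HasDerivAt (fun t => (u t).im) ((deriv u x).im) x := fun x =>
    Complex.imCLM.hasFDerivAt.comp_hasDerivAt x (hud x).hasDerivAt
  have hvr : ∀ x, HasDerivAt (fun t => (deriv u t).re) ((deriv (deriv u) x).re) x := fun x =>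
    Complex.reCLM.hasFDerivAt.comp_hasDerivAt x (hud' x).hasDerivAt
  have hvi : ∀ x, HasDerivAt (fun t => (deriv u t).im) ((deriv (deriv u) x).im) x := fun x =>
    Complex.imCLM.hasFDerivAt.comp_hasDerivAt x (hud' x).hasDerivAt
  -- real and imaginary parts of the equation
  have eqre : ∀ x, (deriv (deriv u) x).re
      = 2 * (Q' x * (u x).re + kinkProfile c x * (deriv u x).re) + (n : ℝ) * (u x).im := by
    intro x
    have h := congrArg Complex.re (heq2 x)
    simp [Complex.mul_re, Complex.mul_im, Complex.add_re, Complex.sub_re,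
      Complex.ofReal_re, Complex.ofReal_im, Complex.I_re, Complex.I_im] at h
    linear_combination h
  have eqim : ∀ x, (deriv (deriv u) x).im
      = 2 * (Q' x * (u x).im + kinkProfile c x * (deriv u x).im) - (n : ℝ) * (u x).re := by
    intro x
    have h := congrArg Complex.im (heq2 x)
    simp [Complex.mul_re, Complex.mul_im, Complex.add_im, Complex.sub_im,
      Complex.ofReal_re, Complex.ofReal_im, Complex.I_re, Complex.I_im] at h
    linear_combination h
  -- the key real-valued functions
  set g : ℝ → ℝ := fun x => (u x).re * (u x).re + (u x).im * (u x).im with hgdef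
  set k : ℝ → ℝ := fun x => (deriv u x).re * (deriv u x).re + (deriv u x).im * (deriv u x).im
    with hkdef
  set F : ℝ → ℝ := fun x =>
    ((u x).re * (deriv u x).re + (u x).im * (deriv u x).im) - kinkProfile c x * g x with hFdef
  have hgnonneg : ∀ x, 0 ≤ g x := fun x => by
    simp only [hgdef]; nlinarith [mul_self_nonneg (u x).re, mul_self_nonneg (u x).im]
  have hknonneg : ∀ x, 0 ≤ k x := fun x => by
    simp only [hkdef]
    nlinarith [mul_self_nonneg (deriv u x).re, mul_self_nonneg (deriv u x).im]
  have hnormu : ∀ x, ‖u x‖ = Real.sqrt (g x) := by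
    intro x
    rw [Complex.norm_def, Complex.normSq_apply]
  have hnormv : ∀ x, ‖deriv u x‖ = Real.sqrt (k x) := by
    intro x
    rw [Complex.norm_def, Complex.normSq_apply]
  -- derivatives of g and k
  have hgd : ∀ x, HasDerivAt g
      (2 * ((u x).re * (deriv u x).re + (u x).im * (deriv u x).im)) x := by
    intro x
    have h := ((hur x).mul (hur x)).add ((hui x).mul (hui x))
    exact h.congr_deriv (by ring)
  have hkd : ∀ x, HasDerivAt k
      (2 * ((deriv u x).re * (deriv (deriv u) x).re
        + (deriv u x).im * (deriv (deriv u) x).im)) x := by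
    intro x
    have h := ((hvr x).mul (hvr x)).add ((hvi x).mul (hvi x))
    exact h.congr_deriv (by ring)
  -- derivative of F
  have hFd : ∀ x, HasDerivAt F (k x + Q' x * g x) x := by
    intro x
    have h1 := ((hur x).mul (hvr x)).add ((hui x).mul (hvi x))
    have h2 := (hQd x).mul (hgd x)
    have h := h1.sub h2
    have goal_eq : k x + Q' x * g x
        = ((deriv u x).re * (deriv u x).re + (u x).re * (deriv (deriv u) x).re
            + ((deriv u x).im * (deriv u x).im + (u x).im * (deriv (deriv u) x).im))
          - (Q' x * g x + kinkProfile c x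
              * (2 * ((u x).re * (deriv u x).re + (u x).im * (deriv u x).im))) := by
      simp only [hgdef, hkdef]
      linear_combination (-(u x).re) * eqre x - (u x).im * eqim x
    rw [goal_eq]
    exact h
  -- integrability of g, k and their derivatives
  have gInt : Integrable g := sq_norm_integrable hu
  have kInt : Integrable k := sq_norm_integrable hu'
  have gdInt : Integrable (fun x =>
      2 * ((u x).re * (deriv u x).re + (u x).im * (deriv u x).im)) := by
    refine Integrable.mono' ((prod_L2_integrable hu hu').const_mul 2) ?_ (ae_of_all _ ?_)
    · exact (continuous_const.mul
        (((Complex.continuous_re.comp hcu).mul (Complex.continuous_re.comp hcu')).add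
        ((Complex.continuous_im.comp hcu).mul
          (Complex.continuous_im.comp hcu')))).aestronglyMeasurable
    · intro x
      have := re_prod_le (z := u x) (w := deriv u x)
      rw [Real.norm_eq_abs, abs_mul]
      calc |2| * |(u x).re * (deriv u x).re + (u x).im * (deriv u x).im|
          ≤ |2| * (‖u x‖ * ‖deriv u x‖) := by
            exact mul_le_mul_of_nonneg_left this (abs_nonneg _)
        _ = 2 * (‖u x‖ * ‖deriv u x‖) := by norm_num
  have hcu'' : Continuous (deriv (deriv u)) := h2r.continuous_deriv le_rfl
  have kdInt : Integrable (fun x =>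
      2 * ((deriv u x).re * (deriv (deriv u) x).re
        + (deriv u x).im * (deriv (deriv u) x).im)) := by
    refine Integrable.mono' ((prod_L2_integrable hu' hu'').const_mul 2) ?_ (ae_of_all _ ?_)
    · exact (continuous_const.mul
        (((Complex.continuous_re.comp hcu').mul (Complex.continuous_re.comp hcu'')).add
        ((Complex.continuous_im.comp hcu').mul
          (Complex.continuous_im.comp hcu'')))).aestronglyMeasurable
    · intro x
      have := re_prod_le (z := deriv u x) (w := deriv (deriv u) x)
      rw [Real.norm_eq_abs, abs_mul]
      calc |2| * |(deriv u x).re * (deriv (deriv u) x).re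
            + (deriv u x).im * (deriv (deriv u) x).im|
          ≤ |2| * (‖deriv u x‖ * ‖deriv (deriv u) x‖) := by
            exact mul_le_mul_of_nonneg_left this (abs_nonneg _)
        _ = 2 * (‖deriv u x‖ * ‖deriv (deriv u) x‖) := by norm_num
  -- limits at infinity
  have gTop : Filter.Tendsto g Filter.atTop (nhds 0) :=
    tendsto_zero_of_hasDerivAt_of_integrableOn_Ioi (a := 0) (fun x _ => hgd x)
      gdInt.integrableOn gInt.integrableOn
  have gBot : Filter.Tendsto g Filter.atBot (nhds 0) :=
    tendsto_zero_of_hasDerivAt_of_integrableOn_Iic (a := 0) (fun x _ => hgd x)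
      gdInt.integrableOn gInt.integrableOn
  have kTop : Filter.Tendsto k Filter.atTop (nhds 0) :=
    tendsto_zero_of_hasDerivAt_of_integrableOn_Ioi (a := 0) (fun x _ => hkd x)
      kdInt.integrableOn kInt.integrableOn
  have kBot : Filter.Tendsto k Filter.atBot (nhds 0) :=
    tendsto_zero_of_hasDerivAt_of_integrableOn_Iic (a := 0) (fun x _ => hkd x)
      kdInt.integrableOn kInt.integrableOn
  -- F tends to 0 at both infinities
  have hFbound : ∀ x, ‖F x‖ ≤ Real.sqrt (g x) * Real.sqrt (k x) + a * g x := by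
    intro x
    have h1 : |(u x).re * (deriv u x).re + (u x).im * (deriv u x).im|
        ≤ Real.sqrt (g x) * Real.sqrt (k x) := by
      have := re_prod_le (z := u x) (w := deriv u x)
      rwa [hnormu x, hnormv x] at this
    have h2 : |kinkProfile c x * g x| ≤ a * g x := by
      rw [abs_mul, abs_of_nonneg (hgnonneg x)]
      exact mul_le_mul_of_nonneg_right (hQbound x) (hgnonneg x)
    have h3 : ‖F x‖ ≤ |(u x).re * (deriv u x).re + (u x).im * (deriv u x).im|
        + |kinkProfile c x * g x| := by
      rw [Real.norm_eq_abs]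
      exact abs_sub _ _
    exact h3.trans (add_le_add h1 h2)
  have hbndTop : Filter.Tendsto (fun x => Real.sqrt (g x) * Real.sqrt (k x) + a * g x)
      Filter.atTop (nhds 0) := by
    have h1 : Filter.Tendsto (fun x => Real.sqrt (g x)) Filter.atTop (nhds 0) := by
      simpa [Function.comp_def] using (Real.continuous_sqrt.tendsto 0).comp gTop
    have h2 : Filter.Tendsto (fun x => Real.sqrt (k x)) Filter.atTop (nhds 0) := by
      simpa [Function.comp_def] using (Real.continuous_sqrt.tendsto 0).comp kTop
    simpa using (h1.mul h2).add (gTop.const_mul a)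
  have hbndBot : Filter.Tendsto (fun x => Real.sqrt (g x) * Real.sqrt (k x) + a * g x)
      Filter.atBot (nhds 0) := by
    have h1 : Filter.Tendsto (fun x => Real.sqrt (g x)) Filter.atBot (nhds 0) := by
      simpa [Function.comp_def] using (Real.continuous_sqrt.tendsto 0).comp gBot
    have h2 : Filter.Tendsto (fun x => Real.sqrt (k x)) Filter.atBot (nhds 0) := by
      simpa [Function.comp_def] using (Real.continuous_sqrt.tendsto 0).comp kBot
    simpa using (h1.mul h2).add (gBot.const_mul a)
  have FTop : Filter.Tendsto F Filter.atTop (nhds 0) := squeeze_zero_norm hFbound hbndTop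
  have FBot : Filter.Tendsto F Filter.atBot (nhds 0) := squeeze_zero_norm hFbound hbndBot
  -- F is monotone
  have hFmono : Monotone F := by
    apply monotone_of_deriv_nonneg (fun x => (hFd x).differentiableAt)
    intro x
    rw [(hFd x).deriv]
    have := hknonneg x
    have := (hQ'pos x).le
    have := hgnonneg x
    positivity
  -- F vanishes identically
  have hF0 : ∀ x, F x = 0 := by
    intro x
    refine le_antisymm ?_ ?_
    · exact ge_of_tendsto FTop (Filter.eventually_atTop.2 ⟨x, fun y hy => hFmono hy⟩)
    · exact le_of_tendsto FBot (Filter.eventually_atBot.2 ⟨x, fun y hy => hFmono hy⟩)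
  -- conclude
  intro x
  have hdF : deriv F x = 0 := by
    have : F = fun _ => (0 : ℝ) := funext hF0
    rw [this]; simp
  rw [(hFd x).deriv] at hdF
  have hg0 : g x = 0 := by nlinarith [hknonneg x, hQ'pos x, hgnonneg x]
  have : Complex.normSq (u x) = 0 := by
    rw [Complex.normSq_apply]; exact hg0
  exact Complex.normSq_eq_zero.mp this
end

section
/- Let c > 0. There exist a constant C > 0 and a natural number n₀ such that for every n ∈ ℤ with |n| ≥ n₀ and every pair of smooth functions u, f : ℝ → ℂ, rapidly decaying at infinity together with all their derivatives, satisfying u''(x) + i·n·u(x) − 2·(Q_c(x)·u(x))' = f'(x) for all x ∈ ℝ, one has ‖u‖_{L²(ℝ)} + ‖u'‖_{L²(ℝ)} ≤ C·‖f‖_{L²(ℝ)}. -/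
open MeasureTheory Real

/-- The `L²(ℝ)` norm of a complex-valued function. -/
noncomputable def L2normC (g : ℝ → ℂ) : ℝ := Real.sqrt (∫ x : ℝ, ‖g x‖ ^ 2)

section Helpers
open Complex


lemma tanh_hasDerivAt (y : ℝ) : HasDerivAt Real.tanh (1 - Real.tanh y ^ 2) y := by
  have h := (Real.hasDerivAt_sinh y).div (Real.hasDerivAt_cosh y) (Real.cosh_pos y).ne'
  have heq : (Real.sinh / Real.cosh) = Real.tanh :=
    funext fun x => (Real.tanh_eq_sinh_div_cosh x).symm
  rw [heq] at h
  refine h.congr_deriv (Eq.symm ?_)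
  have hc := (Real.cosh_pos y).ne'
  have hid := Real.cosh_sq_sub_sinh_sq y
  rw [Real.tanh_eq_sinh_div_cosh]
  field_simp

lemma abs_tanh_le_one (y : ℝ) : |Real.tanh y| ≤ 1 := by
  have h1 : Real.sinh y < Real.cosh y := Real.sinh_lt_cosh y
  have h2 : Real.sinh (-y) < Real.cosh (-y) := Real.sinh_lt_cosh (-y)
  rw [Real.sinh_neg, Real.cosh_neg] at h2
  rw [Real.tanh_eq_sinh_div_cosh, abs_div, abs_of_pos (Real.cosh_pos y),
    div_le_one (Real.cosh_pos y)]
  rw [abs_le]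
  constructor <;> linarith

lemma continuous_tanh' : Continuous Real.tanh :=
  continuous_iff_continuousAt.mpr fun x => (tanh_hasDerivAt x).continuousAt

lemma final_algebra {b X Y F n' : ℝ} (hb : 0 ≤ b) (hX : 0 ≤ X) (hY : 0 ≤ Y) (hF : 0 ≤ F)
    (h1 : Y ^ 2 ≤ F * Y + 2 * b * X * Y) (h2 : n' * X ^ 2 ≤ F * Y + 2 * b * X * Y)
    (hn : 8 * b ^ 2 + 2 ≤ n') :
    X + Y ≤ (2 * b + 2) * F := by
  have hY' : Y ≤ F + 2 * b * X := by
    rcases eq_or_lt_of_le hY with h | h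
    · nlinarith
    · nlinarith
  have hX' : X ≤ F := by
    have hQ : n' * X ^ 2 ≤ (F + 2 * b * X) ^ 2 := by nlinarith
    nlinarith [sq_nonneg (2 * b * X - F), sq_nonneg X, sq_nonneg b, mul_nonneg (mul_nonneg hb hX) hF]
  nlinarith


lemma integrable_star_dup {φ : ℝ → ℂ} (hc : Continuous φ) (hi : Integrable φ) :
    Integrable (fun x => star (φ x)) := by
  refine ⟨(continuous_star.comp hc).aestronglyMeasurable, ?_⟩
  have := hi.2
  simpa [HasFiniteIntegral] using this

lemma L2_cauchy_schwarz {φ ψ : ℝ → ℂ} (hφc : Continuous φ) (hψc : Continuous ψ)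
    (hφ : Integrable (fun x => ‖φ x‖ ^ 2)) (hψ : Integrable (fun x => ‖ψ x‖ ^ 2)) :
    ∫ x : ℝ, ‖φ x‖ * ‖ψ x‖ ≤
      Real.sqrt (∫ x : ℝ, ‖φ x‖ ^ 2) * Real.sqrt (∫ x : ℝ, ‖ψ x‖ ^ 2) := by
  have hpq : Real.HolderConjugate 2 2 := Real.HolderConjugate.two_two
  have h2 : ENNReal.ofReal (2 : ℝ) = 2 := by
    rw [ENNReal.ofReal_ofNat]
  have h1 : MemLp φ (ENNReal.ofReal (2 : ℝ)) volume := by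
    rw [h2]
    exact (memLp_two_iff_integrable_sq_norm hφc.aestronglyMeasurable).mpr hφ
  have h1' : MemLp ψ (ENNReal.ofReal (2 : ℝ)) volume := by
    rw [h2]
    exact (memLp_two_iff_integrable_sq_norm hψc.aestronglyMeasurable).mpr hψ
  have h := MeasureTheory.integral_mul_norm_le_Lp_mul_Lq hpq h1 h1'
  simp_rw [show (2 : ℝ) = ((2 : ℕ) : ℝ) by norm_num, Real.rpow_natCast] at h
  rw [Real.sqrt_eq_rpow, Real.sqrt_eq_rpow]
  convert h using 3 <;> norm_num

lemma integrable_star {φ : ℝ → ℂ} (hc : Continuous φ) (hi : Integrable φ) :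
    Integrable (fun x => star (φ x)) := by
  refine ⟨(continuous_star.comp hc).aestronglyMeasurable, ?_⟩
  simpa [HasFiniteIntegral] using hi.2

set_option maxHeartbeats 1000000 in
lemma key_estimate (b : ℝ) (hb : 0 < b) (Q Qd : ℝ → ℝ)
    (hQ : ∀ x, HasDerivAt Q (Qd x) x) (hQdc : Continuous Qd)
    (hQb : ∀ x, |Q x| ≤ b) (hQdb : ∀ x, |Qd x| ≤ b ^ 2)
    (n : ℤ) (hn : 8 * b ^ 2 + 2 ≤ |(n : ℝ)|) (u f : SchwartzMap ℝ ℂ)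
    (hEq : ∀ x : ℝ,
      deriv (deriv (u : ℝ → ℂ)) x + (n : ℂ) * Complex.I * u x
        - 2 * deriv (fun t => ((Q t : ℝ) : ℂ) * u t) x = deriv (f : ℝ → ℂ) x) :
    L2normC u + L2normC (deriv (u : ℝ → ℂ)) ≤ (2 * b + 2) * L2normC f := by
  classical
  set u1 : SchwartzMap ℝ ℂ := SchwartzMap.derivCLM ℝ ℂ u with hu1def
  set u2 : SchwartzMap ℝ ℂ := SchwartzMap.derivCLM ℝ ℂ u1 with hu2def
  set f1 : SchwartzMap ℝ ℂ := SchwartzMap.derivCLM ℝ ℂ f with hf1def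
  have e1 : deriv (u : ℝ → ℂ) = (u1 : ℝ → ℂ) :=
    funext fun x => (SchwartzMap.derivCLM_apply ℝ u x).symm
  have e2 : deriv (u1 : ℝ → ℂ) = (u2 : ℝ → ℂ) :=
    funext fun x => (SchwartzMap.derivCLM_apply ℝ u1 x).symm
  have e3 : deriv (f : ℝ → ℂ) = (f1 : ℝ → ℂ) :=
    funext fun x => (SchwartzMap.derivCLM_apply ℝ f x).symm
  rw [e1]
  -- derivative facts
  have hu' : ∀ x, HasDerivAt (u : ℝ → ℂ) (u1 x) x := by
    intro x
    have := (u.differentiableAt (x := x)).hasDerivAt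
    rwa [e1] at this
  have hu1' : ∀ x, HasDerivAt (u1 : ℝ → ℂ) (u2 x) x := by
    intro x
    have := (u1.differentiableAt (x := x)).hasDerivAt
    rwa [e2] at this
  have hf' : ∀ x, HasDerivAt (f : ℝ → ℂ) (f1 x) x := by
    intro x
    have := (f.differentiableAt (x := x)).hasDerivAt
    rwa [e3] at this
  have hg : ∀ x, HasDerivAt (fun t => ((Q t : ℝ) : ℂ) * u t)
      (((Qd x : ℝ) : ℂ) * u x + ((Q x : ℝ) : ℂ) * u1 x) x :=
    fun x => ((hQ x).ofReal_comp).mul (hu' x)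
  have hEq2 : ∀ x, (u2 : ℝ → ℂ) x + (n : ℂ) * Complex.I * u x
      - 2 * (((Qd x : ℝ) : ℂ) * u x + ((Q x : ℝ) : ℂ) * u1 x) = f1 x := by
    intro x
    have h := hEq x
    rw [e1, e2, e3, (hg x).deriv] at h
    exact h
  -- conj functions
  set V : ℝ → ℂ := fun x => star ((u : ℝ → ℂ) x) with hVdef
  set V' : ℝ → ℂ := fun x => star ((u1 : ℝ → ℂ) x) with hV'def
  have hV : ∀ x, HasDerivAt V (V' x) x := fun x => (hu' x).star
  -- continuity
  have hQc : Continuous Q := continuous_iff_continuousAt.mpr fun x => (hQ x).continuousAt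
  have hVc : Continuous V := continuous_star.comp u.continuous
  have hV'c : Continuous V' := continuous_star.comp u1.continuous
  -- boundedness
  have bddS : ∀ w : SchwartzMap ℝ ℂ, ∃ C, ∀ x, ‖w x‖ ≤ C :=
    fun w => ⟨_, fun x => w.norm_le_seminorm ℝ x⟩
  have bddV : ∃ C, ∀ x, ‖V x‖ ≤ C := by
    obtain ⟨C, hC⟩ := bddS u
    exact ⟨C, fun x => by rw [hVdef]; simpa only [norm_star] using hC x⟩
  have bddV' : ∃ C, ∀ x, ‖V' x‖ ≤ C := by
    obtain ⟨C, hC⟩ := bddS u1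
    exact ⟨C, fun x => by rw [hV'def]; simpa only [norm_star] using hC x⟩
  have bddQ : ∃ C, ∀ x, ‖((Q x : ℝ) : ℂ)‖ ≤ C :=
    ⟨b, fun x => by simpa [Complex.norm_real] using hQb x⟩
  have bddQd : ∃ C, ∀ x, ‖((Qd x : ℝ) : ℂ)‖ ≤ C :=
    ⟨b ^ 2, fun x => by simpa [Complex.norm_real] using hQdb x⟩
  -- integrability of products
  have hprod : ∀ (φ ψ : ℝ → ℂ), Continuous φ → (∃ C, ∀ x, ‖φ x‖ ≤ C) → Integrable ψ →
      Integrable (fun x => φ x * ψ x) :=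
    fun φ ψ hc hbdd hi => hbdd.elim fun C hC => hi.bdd_mul (c := C) hc.aestronglyMeasurable (Filter.Eventually.of_forall hC)
  have iV : Integrable V := integrable_star u.continuous u.integrable
  have iV' : Integrable V' := integrable_star u1.continuous u1.integrable
  have I_u1V' : Integrable (fun x => (u1 : ℝ → ℂ) x * V' x) :=
    hprod _ _ u1.continuous (bddS u1) iV'
  have I_u2V : Integrable (fun x => (u2 : ℝ → ℂ) x * V x) :=
    hprod _ _ u2.continuous (bddS u2) iV
  have I_u1V : Integrable (fun x => (u1 : ℝ → ℂ) x * V x) :=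
    hprod _ _ u1.continuous (bddS u1) iV
  have I_uV : Integrable (fun x => (u : ℝ → ℂ) x * V x) :=
    hprod _ _ u.continuous (bddS u) iV
  have I_uV' : Integrable (fun x => (u : ℝ → ℂ) x * V' x) :=
    hprod _ _ u.continuous (bddS u) iV'
  have I_fV : Integrable (fun x => (f : ℝ → ℂ) x * V x) :=
    hprod _ _ f.continuous (bddS f) iV
  have I_fV' : Integrable (fun x => (f : ℝ → ℂ) x * V' x) :=
    hprod _ _ f.continuous (bddS f) iV'
  have I_f1V : Integrable (fun x => (f1 : ℝ → ℂ) x * V x) :=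
    hprod _ _ f1.continuous (bddS f1) iV
  have I_gV' : Integrable (fun x => ((Q x : ℝ) : ℂ) * u x * V' x) := by
    have := hprod (fun x => ((Q x : ℝ) : ℂ)) (fun x => (u : ℝ → ℂ) x * V' x)
      (Complex.continuous_ofReal.comp hQc) bddQ I_uV'
    simpa [mul_assoc] using this
  have I_gV : Integrable (fun x => ((Q x : ℝ) : ℂ) * u x * V x) := by
    have := hprod (fun x => ((Q x : ℝ) : ℂ)) (fun x => (u : ℝ → ℂ) x * V x)
      (Complex.continuous_ofReal.comp hQc) bddQ I_uV
    simpa [mul_assoc] using this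
  have I_g'V : Integrable
      (fun x => (((Qd x : ℝ) : ℂ) * u x + ((Q x : ℝ) : ℂ) * u1 x) * V x) := by
    have h1 := hprod (fun x => ((Qd x : ℝ) : ℂ)) (fun x => (u : ℝ → ℂ) x * V x)
      (Complex.continuous_ofReal.comp hQdc) bddQd I_uV
    have h2 := hprod (fun x => ((Q x : ℝ) : ℂ)) (fun x => (u1 : ℝ → ℂ) x * V x)
      (Complex.continuous_ofReal.comp hQc) bddQ I_u1V
    have := h1.add h2
    apply this.congr
    filter_upwards with x
    simp only [Pi.add_apply]
    ring
  -- integration by parts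
  have ibp1 : ∫ x : ℝ, (u1 : ℝ → ℂ) x * V' x = -∫ x : ℝ, (u2 : ℝ → ℂ) x * V x :=
    MeasureTheory.integral_mul_deriv_eq_deriv_mul_of_integrable (fun x _ => hu1' x) (fun x _ => hV x) I_u1V' I_u2V I_u1V
  have ibp2 : ∫ x : ℝ, ((Q x : ℝ) : ℂ) * u x * V' x
      = -∫ x : ℝ, (((Qd x : ℝ) : ℂ) * u x + ((Q x : ℝ) : ℂ) * u1 x) * V x :=
    MeasureTheory.integral_mul_deriv_eq_deriv_mul_of_integrable (fun x _ => hg x) (fun x _ => hV x) I_gV' I_g'V I_gV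
  have ibp3 : ∫ x : ℝ, (f : ℝ → ℂ) x * V' x = -∫ x : ℝ, (f1 : ℝ → ℂ) x * V x :=
    MeasureTheory.integral_mul_deriv_eq_deriv_mul_of_integrable (fun x _ => hf' x) (fun x _ => hV x) I_fV' I_f1V I_fV
  -- integrate equation against V
  have key : ∫ x : ℝ, (u2 : ℝ → ℂ) x * V x
      = (∫ x : ℝ, (f1 : ℝ → ℂ) x * V x) - (n : ℂ) * Complex.I * (∫ x : ℝ, (u : ℝ → ℂ) x * V x)
        + 2 * (∫ x : ℝ, (((Qd x : ℝ) : ℂ) * u x + ((Q x : ℝ) : ℂ) * u1 x) * V x) := by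
    have hpt : ∀ x : ℝ, (u2 : ℝ → ℂ) x * V x
        = (f1 : ℝ → ℂ) x * V x - (n : ℂ) * Complex.I * ((u : ℝ → ℂ) x * V x)
          + 2 * ((((Qd x : ℝ) : ℂ) * u x + ((Q x : ℝ) : ℂ) * u1 x) * V x) := fun x => by
      linear_combination (hEq2 x) * V x
    calc ∫ x : ℝ, (u2 : ℝ → ℂ) x * V x
        = ∫ x : ℝ, ((f1 : ℝ → ℂ) x * V x - (n : ℂ) * Complex.I * ((u : ℝ → ℂ) x * V x)
          + 2 * ((((Qd x : ℝ) : ℂ) * u x + ((Q x : ℝ) : ℂ) * u1 x) * V x)) :=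
          integral_congr_ae (Filter.Eventually.of_forall hpt)
      _ = _ := by
          have hsub : Integrable (fun x => (f1 : ℝ → ℂ) x * V x
              - (n : ℂ) * Complex.I * ((u : ℝ → ℂ) x * V x)) volume :=
            I_f1V.sub (I_uV.const_mul _)
          have hmul2 : Integrable (fun x =>
              (2 : ℂ) * ((((Qd x : ℝ) : ℂ) * u x + ((Q x : ℝ) : ℂ) * u1 x) * V x)) volume :=
            I_g'V.const_mul _
          rw [integral_add hsub hmul2, integral_sub I_f1V (I_uV.const_mul _),
            integral_const_mul, integral_const_mul]
  -- main complex identity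
  have hmain : (∫ x : ℝ, (u1 : ℝ → ℂ) x * V' x)
      = (∫ x : ℝ, (f : ℝ → ℂ) x * V' x) + (n : ℂ) * Complex.I * (∫ x : ℝ, (u : ℝ → ℂ) x * V x)
        + 2 * (∫ x : ℝ, ((Q x : ℝ) : ℂ) * u x * V' x) := by
    rw [ibp1, key, ibp2, ibp3]
    ring
  -- abbreviations
  set R : ℂ := ∫ x : ℝ, (f : ℝ → ℂ) x * V' x with hRdef
  set P : ℂ := ∫ x : ℝ, ((Q x : ℝ) : ℂ) * u x * V' x with hPdef
  have hA0 : (0:ℝ) ≤ ∫ x : ℝ, ‖(u1 : ℝ → ℂ) x‖ ^ 2 := integral_nonneg fun x => sq_nonneg _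
  have hB0 : (0:ℝ) ≤ ∫ x : ℝ, ‖(u : ℝ → ℂ) x‖ ^ 2 := integral_nonneg fun x => sq_nonneg _
  have hAC : ∫ x : ℝ, (u1 : ℝ → ℂ) x * V' x = ((∫ x : ℝ, ‖(u1 : ℝ → ℂ) x‖ ^ 2 : ℝ) : ℂ) := by
    have hfun : (fun x => (u1 : ℝ → ℂ) x * V' x)
        = fun x => ((‖(u1 : ℝ → ℂ) x‖ ^ 2 : ℝ) : ℂ) := by
      funext x
      rw [hV'def]
      simp [Complex.star_def, Complex.mul_conj, Complex.normSq_eq_norm_sq]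
    rw [hfun]
    exact integral_ofReal
  have hBC : ∫ x : ℝ, (u : ℝ → ℂ) x * V x = ((∫ x : ℝ, ‖(u : ℝ → ℂ) x‖ ^ 2 : ℝ) : ℂ) := by
    have hfun : (fun x => (u : ℝ → ℂ) x * V x)
        = fun x => ((‖(u : ℝ → ℂ) x‖ ^ 2 : ℝ) : ℂ) := by
      funext x
      rw [hVdef]
      simp [Complex.star_def, Complex.mul_conj, Complex.normSq_eq_norm_sq]
    rw [hfun]
    exact integral_ofReal
  rw [hAC, hBC] at hmain
  set A : ℝ := ∫ x : ℝ, ‖(u1 : ℝ → ℂ) x‖ ^ 2 with hAdef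
  set B : ℝ := ∫ x : ℝ, ‖(u : ℝ → ℂ) x‖ ^ 2 with hBdef
  -- real and imaginary parts
  have hre : A = R.re + 2 * P.re := by
    have h := congrArg Complex.re hmain
    simp [Complex.add_re, Complex.mul_re, Complex.mul_im, Complex.I_re, Complex.I_im,
      Complex.ofReal_re, Complex.ofReal_im] at h
    linarith
  have him : 0 = R.im + (n : ℝ) * B + 2 * P.im := by
    have h := congrArg Complex.im hmain
    simp [Complex.add_im, Complex.mul_re, Complex.mul_im, Complex.I_re, Complex.I_im,
      Complex.ofReal_re, Complex.ofReal_im] at h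
    linarith
  -- norm bounds via Cauchy-Schwarz
  have hI2u : Integrable (fun x => ‖(u : ℝ → ℂ) x‖ ^ 2) := by
    refine (I_uV.norm).congr ?_
    filter_upwards with x
    rw [hVdef]
    simp [norm_mul, sq]
  have hI2u1 : Integrable (fun x => ‖(u1 : ℝ → ℂ) x‖ ^ 2) := by
    refine (I_u1V'.norm).congr ?_
    filter_upwards with x
    rw [hV'def]
    simp [norm_mul, sq]
  have hI2f : Integrable (fun x => ‖(f : ℝ → ℂ) x‖ ^ 2) := by
    have I_ff : Integrable (fun x => (f : ℝ → ℂ) x * star ((f : ℝ → ℂ) x)) :=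
      hprod _ _ f.continuous (bddS f) (integrable_star f.continuous f.integrable)
    refine (I_ff.norm).congr ?_
    filter_upwards with x
    simp [norm_mul, sq]
  have I_uu1 : Integrable (fun x => ‖(u : ℝ → ℂ) x‖ * ‖(u1 : ℝ → ℂ) x‖) := by
    refine (I_uV'.norm).congr ?_
    filter_upwards with x
    rw [hV'def]
    simp [norm_mul]
  have hRb : ‖R‖ ≤ Real.sqrt (∫ x : ℝ, ‖(f : ℝ → ℂ) x‖ ^ 2) * Real.sqrt A := by
    calc ‖R‖ ≤ ∫ x : ℝ, ‖(f : ℝ → ℂ) x * V' x‖ := norm_integral_le_integral_norm _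
      _ = ∫ x : ℝ, ‖(f : ℝ → ℂ) x‖ * ‖(u1 : ℝ → ℂ) x‖ := by
          apply integral_congr_ae
          filter_upwards with x
          rw [hV'def]
          simp [norm_mul]
      _ ≤ _ := L2_cauchy_schwarz f.continuous u1.continuous hI2f hI2u1
  have hPb : ‖P‖ ≤ b * (Real.sqrt B * Real.sqrt A) := by
    calc ‖P‖ ≤ ∫ x : ℝ, ‖((Q x : ℝ) : ℂ) * u x * V' x‖ := norm_integral_le_integral_norm _
      _ ≤ ∫ x : ℝ, b * (‖(u : ℝ → ℂ) x‖ * ‖(u1 : ℝ → ℂ) x‖) := by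
          apply integral_mono I_gV'.norm (I_uu1.const_mul b)
          intro x
          rw [hV'def]
          simp only [norm_mul, norm_star, Complex.norm_real]
          have h1 := hQb x
          have h2 : (0:ℝ) ≤ ‖(u : ℝ → ℂ) x‖ * ‖(u1 : ℝ → ℂ) x‖ :=
            mul_nonneg (norm_nonneg _) (norm_nonneg _)
          calc |Q x| * ‖(u : ℝ → ℂ) x‖ * ‖(u1 : ℝ → ℂ) x‖
              = |Q x| * (‖(u : ℝ → ℂ) x‖ * ‖(u1 : ℝ → ℂ) x‖) := by ring
            _ ≤ b * (‖(u : ℝ → ℂ) x‖ * ‖(u1 : ℝ → ℂ) x‖) := by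
                exact mul_le_mul_of_nonneg_right h1 h2
      _ = b * ∫ x : ℝ, ‖(u : ℝ → ℂ) x‖ * ‖(u1 : ℝ → ℂ) x‖ := integral_const_mul b _
      _ ≤ b * (Real.sqrt B * Real.sqrt A) := by
          exact mul_le_mul_of_nonneg_left
            (L2_cauchy_schwarz u.continuous u1.continuous hI2u hI2u1) hb.le
  -- put everything together
  have hRre : R.re ≤ ‖R‖ := by
    exact (le_abs_self _).trans (Complex.abs_re_le_norm R)
  have hPre : P.re ≤ ‖P‖ := by
    exact (le_abs_self _).trans (Complex.abs_re_le_norm P)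
  have hRim : |R.im| ≤ ‖R‖ := by
    exact Complex.abs_im_le_norm R
  have hPim : |P.im| ≤ ‖P‖ := by
    exact Complex.abs_im_le_norm P
  set X : ℝ := Real.sqrt B with hXdef
  set Y : ℝ := Real.sqrt A with hYdef
  set F : ℝ := Real.sqrt (∫ x : ℝ, ‖(f : ℝ → ℂ) x‖ ^ 2) with hFdef
  have hX0 : 0 ≤ X := Real.sqrt_nonneg _
  have hY0 : 0 ≤ Y := Real.sqrt_nonneg _
  have hF0 : 0 ≤ F := Real.sqrt_nonneg _
  have hAY : A = Y ^ 2 := (Real.sq_sqrt hA0).symm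
  have hBX : B = X ^ 2 := (Real.sq_sqrt hB0).symm
  have h1 : Y ^ 2 ≤ F * Y + 2 * b * X * Y := by
    have := hre
    rw [hAY] at this
    have hR' := hRb
    have hP' := hPb
    nlinarith [hRre, hPre]
  have h2 : |(n : ℝ)| * X ^ 2 ≤ F * Y + 2 * b * X * Y := by
    have hnb : |(n : ℝ)| * B = |R.im + 2 * P.im| := by
      have : (n : ℝ) * B = -(R.im + 2 * P.im) := by linarith
      calc |(n : ℝ)| * B = |(n : ℝ) * B| := by rw [_root_.abs_mul, _root_.abs_of_nonneg hB0]
        _ = |R.im + 2 * P.im| := by rw [this, _root_.abs_neg]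
    have habs : |R.im + 2 * P.im| ≤ ‖R‖ + 2 * ‖P‖ := by
      calc |R.im + 2 * P.im| ≤ |R.im| + |2 * P.im| := abs_add_le _ _
        _ = |R.im| + 2 * |P.im| := by rw [_root_.abs_mul, _root_.abs_of_nonneg (by norm_num : (0:ℝ) ≤ 2)]
        _ ≤ ‖R‖ + 2 * ‖P‖ := by linarith [hRim, hPim]
    rw [← hBX]
    rw [hnb]
    nlinarith [hRb, hPb]
  have hfinal := final_algebra hb.le hX0 hY0 hF0 h1 h2 hn
  simpa only [L2normC, ← hBdef, ← hAdef, ← hXdef, ← hYdef, ← hFdef] using hfinal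

set_option maxHeartbeats 1000000 in
/-- Uniform-in-`n` resolvent bound for the `n`-th transverse Fourier mode of `L_c u = f`:
for `|n|` large, any Schwartz solution of `u'' + i n u − 2(Q_c u)' = f'` satisfies
`‖u‖_{L²} + ‖u'‖_{L²} ≤ C ‖f‖_{L²}` with `C` independent of `n`. -/
theorem fourier_mode_Lc_uniform_bound (c : ℝ) (hc : 0 < c) :
    ∃ C > 0, ∃ n₀ : ℕ, ∀ n : ℤ, (n₀ : ℤ) ≤ |n| → ∀ u f : SchwartzMap ℝ ℂ,
      (∀ x : ℝ,
        deriv (deriv (u : ℝ → ℂ)) x + (n : ℂ) * Complex.I * u x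
          - 2 * deriv (fun t => (kinkProfile c t : ℂ) * u t) x
          = deriv (f : ℝ → ℂ) x) →
      L2normC u + L2normC (deriv (u : ℝ → ℂ)) ≤ C * L2normC f := by
  set b : ℝ := Real.sqrt (c / 2) with hbdef
  have hb : 0 < b := Real.sqrt_pos.mpr (by linarith)
  have hb2 : b ^ 2 = c / 2 := Real.sq_sqrt (by linarith)
  refine ⟨2 * b + 2, by positivity, ⌈8 * b ^ 2 + 2⌉₊, ?_⟩
  intro n hn u f hEq
  have hkink : kinkProfile c = fun y => b * Real.tanh (b * y) := rfl
  have hQ : ∀ x, HasDerivAt (kinkProfile c) (b ^ 2 * (1 - Real.tanh (b * x) ^ 2)) x := by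
    intro x
    have h1 : HasDerivAt (fun y : ℝ => b * y) b x := by
      simpa using (hasDerivAt_id x).const_mul b
    have h2 := (tanh_hasDerivAt (b * x)).comp x h1
    have h3 := h2.const_mul b
    have h4 : HasDerivAt (fun y => b * Real.tanh (b * y))
        (b * ((1 - Real.tanh (b * x) ^ 2) * b)) x := by
      simpa [Function.comp] using h3
    rw [hkink]
    convert h4 using 1
    ring
  have htsq : ∀ y : ℝ, Real.tanh y ^ 2 ≤ 1 := by
    intro y
    have h := abs_tanh_le_one y
    have h0 := abs_nonneg (Real.tanh y)
    nlinarith [_root_.sq_abs (Real.tanh y),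
      mul_nonneg (sub_nonneg.mpr h) (by linarith : (0:ℝ) ≤ 1 + |Real.tanh y|)]
  have hQb : ∀ x, |kinkProfile c x| ≤ b := by
    intro x
    rw [hkink]
    have h := abs_tanh_le_one (b * x)
    rw [_root_.abs_mul, _root_.abs_of_pos hb]
    nlinarith
  have hQdb : ∀ x, |b ^ 2 * (1 - Real.tanh (b * x) ^ 2)| ≤ b ^ 2 := by
    intro x
    have h1 := htsq (b * x)
    have h2 : (0:ℝ) ≤ Real.tanh (b * x) ^ 2 := sq_nonneg _
    rw [_root_.abs_of_nonneg (by nlinarith)]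
    nlinarith
  have hQdc : Continuous fun x : ℝ => b ^ 2 * (1 - Real.tanh (b * x) ^ 2) :=
    continuous_const.mul (continuous_const.sub
      ((continuous_tanh'.comp (continuous_const.mul continuous_id)).pow 2))
  have hn' : 8 * b ^ 2 + 2 ≤ |(n : ℝ)| := by
    have h1 : (8 * b ^ 2 + 2 : ℝ) ≤ (⌈8 * b ^ 2 + 2⌉₊ : ℝ) := Nat.le_ceil _
    have h2 : ((⌈8 * b ^ 2 + 2⌉₊ : ℤ) : ℝ) ≤ ((|n| : ℤ) : ℝ) := by exact_mod_cast hn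
    rw [Int.cast_abs] at h2
    simpa using h1.trans h2
  have := key_estimate b hb (kinkProfile c) (fun x => b ^ 2 * (1 - Real.tanh (b * x) ^ 2))
    hQ hQdc hQb hQdb n hn' u f hEq
  exact this

end Helpers
end
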